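/- Let R = F_q[x_1,...,x_s] be the quotient ring modulo ⟨X_i^{ρ_i}-1⟩ and S = F_q[x_1,...,x_{s-1}] the corresponding subring in s-1 variables. For k = 0,...,ρ_s-1, let 𝔭_k ∈ R be of the form 𝔭_k = Σ_{h=k}^{ρ_s-1} p_h^{(k)}(x_1,...,x_{s-1}) x_s^h with leading S-coefficient p_k := p_k^{(k)} ≠ 0 of degree a_k (degree in S with respect to the lexicographic order). If l_0,...,l_{ρ_s-1} ∈ S satisfy deg l_k <_+ (ρ_1,...,ρ_{s-1}) - a_k componentwise (or l_k = 0) and Σ_{k=0}^{ρ_s-1} l_k 𝔭_k = 0 in R, then l_k = 0 for all k. -/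

import Mathlib

/-!
Comparing coefficients of `x_s^h` turns `∑_k l_k 𝔭_k = 0` into the triangular system
`∑_{k ≤ h} l_k p_h^{(k)} = 0` over `S`, so by induction on `k` it suffices that each diagonal
product `l_k p_k` is nonzero. Because the exponents of `l_k` and `p_k` add without wraparound,
the product of their lexicographically leading monomials is reached in only one way in
`l_k p_k`, so its coefficient is the nonzero product of the leading coefficients.
-/

noncomputable instance lexLO (s : ℕ) : LinearOrder (Lex (Fin s → ℕ)) :=
  have : WellFoundedLT (Fin s) := Finite.to_wellFoundedLT
  @Pi.Lex.linearOrder (Fin s) (fun _ => ℕ) _ this _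

/-- Model of `S = F_q[X₁,…,X_{s-1}]/⟨X_i^{ρ_i}-1⟩` as the group algebra of
`∏_{i<s-1} ℤ/ρ_iℤ`. -/
abbrev QR (F : Type) [Field F] {t : ℕ} (ρ : Fin t → ℕ) : Type :=
  AddMonoidAlgebra F (∀ i : Fin t, ZMod (ρ i))

/-- Model of `R = F_q[X₁,…,X_s]/⟨X_i^{ρ_i}-1⟩` (with `ρ_s = m`), splitting off the last
variable: the group algebra of `(∏_{i<s-1} ℤ/ρ_iℤ) × ℤ/mℤ`. -/
abbrev QRx (F : Type) [Field F] {t : ℕ} (ρ : Fin t → ℕ) (m : ℕ) : Type :=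
  AddMonoidAlgebra F ((∀ i : Fin t, ZMod (ρ i)) × ZMod m)

/-- The inclusion of the subring `S = F_q[x₁,…,x_{s-1}]` into `R`. -/
noncomputable def emb (F : Type) [Field F] {t : ℕ} (ρ : Fin t → ℕ) (m : ℕ) :
    QR F ρ →+* QRx F ρ m :=
  AddMonoidAlgebra.mapDomainRingHom F (AddMonoidHom.inl _ (ZMod m))

/-- The monomial `x_s^h` in `R`. -/
noncomputable def xs (F : Type) [Field F] {t : ℕ} (ρ : Fin t → ℕ) {m : ℕ} (h : Fin m) :
    QRx F ρ m :=
  AddMonoidAlgebra.single (0, ((h : ℕ) : ZMod m)) 1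

/-- The degree of a nonzero element of `S`: the lexicographically largest exponent tuple
with nonzero coefficient. -/
noncomputable def deg {F : Type} [Field F] {t : ℕ} {ρ : Fin t → ℕ}
    (f : QR F ρ) (hf : f ≠ 0) : Fin t → ℕ :=
  ofLex (f.coeff.support.sup' (by simpa [Finsupp.support_nonempty_iff] using hf)
    (fun α => toLex fun i => (α i).val))

open AddMonoidAlgebra

section Lex
variable {t : ℕ} {ρ : Fin t → ℕ} [∀ i, NeZero (ρ i)]

lemma eq_and_eq_of_add_eq_of_toLex_val_le {a b α β : ∀ i, ZMod (ρ i)}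
    (ha : toLex (fun i => (a i).val) ≤ toLex (fun i => (α i).val))
    (hb : toLex (fun i => (b i).val) ≤ toLex (fun i => (β i).val))
    (hαβ : ∀ i, (α i).val + (β i).val < ρ i) (hab : a + b = α + β) :
    a = α ∧ b = β := by
  set A : Lex (Fin t → ℕ) := toLex fun i => (a i).val
  set B : Lex (Fin t → ℕ) := toLex fun i => (b i).val
  -- `≤` is lex monotonicity of addition; `≥` holds even pointwise, as the sums agree mod `ρ i`
  -- and the right-hand one is already reduced.
  have hsum : A + B = toLex (fun i => (α i).val) + toLex (fun i => (β i).val) := by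
    refine le_antisymm (add_le_add ha hb) (Pi.toLex_monotone fun i => ?_)
    have h := congrArg ZMod.val (congrFun hab i)
    rw [Pi.add_apply, Pi.add_apply, ZMod.val_add, ZMod.val_add_of_lt (hαβ i)] at h
    exact h ▸ Nat.mod_le _ _
  have hA : A = toLex (fun i => (α i).val) :=
    ha.eq_of_not_lt fun hlt => (add_lt_add_of_lt_of_le hlt hb).ne hsum
  obtain rfl : a = α :=
    funext fun i => ZMod.val_injective _ (congrFun (toLex.injective hA) i)
  exact ⟨rfl, add_left_cancel hab⟩

end Lex

section Degree
variable {F : Type} [Field F] {t : ℕ} {ρ : Fin t → ℕ}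

lemma toLex_val_le_deg {f : QR F ρ} (hf : f ≠ 0) {a : ∀ i, ZMod (ρ i)}
    (ha : a ∈ f.coeff.support) : toLex (fun i => (a i).val) ≤ toLex (deg f hf) :=
  Finset.le_sup' (fun α => toLex fun i => (α i).val) ha

lemma exists_mem_support_val_eq_deg {f : QR F ρ} (hf : f ≠ 0) :
    ∃ a ∈ f.coeff.support, (fun i => (a i).val) = deg f hf := by
  obtain ⟨a, ha, hmax⟩ := Finset.exists_mem_eq_sup' (Finsupp.support_nonempty_iff.mpr
    (coeff_eq_zero.not.mpr hf)) (fun α : ∀ i, ZMod (ρ i) => toLex fun i => (α i).val)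
  exact ⟨a, ha, congrArg ofLex hmax.symm⟩

lemma mul_ne_zero_of_deg_add_deg_lt [∀ i, NeZero (ρ i)] {f g : QR F ρ} (hf : f ≠ 0) (hg : g ≠ 0)
    (hlt : ∀ i, deg f hf i + deg g hg i < ρ i) : f * g ≠ 0 := by
  obtain ⟨α, hα, hαdeg⟩ := exists_mem_support_val_eq_deg hf
  obtain ⟨β, hβ, hβdeg⟩ := exists_mem_support_val_eq_deg hg
  have huniq : UniqueAdd f.coeff.support g.coeff.support α β := fun a b ha hb hab =>
    eq_and_eq_of_add_eq_of_toLex_val_le (hαdeg ▸ toLex_val_le_deg hf ha)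
      (hβdeg ▸ toLex_val_le_deg hg hb) (by simpa [← hαdeg, ← hβdeg] using hlt) hab
  intro hfg
  have hcoeff := coeff_mul_add_of_uniqueAdd huniq
  rw [hfg, coeff_zero] at hcoeff
  exact mul_ne_zero (Finsupp.mem_support_iff.mp hα) (Finsupp.mem_support_iff.mp hβ) hcoeff.symm

end Degree

section Prod
variable {k G H : Type*} [Semiring k] [AddMonoid G] [AddMonoid H]

lemma mapDomain_inl_mul_single_zero_one (w : AddMonoidAlgebra k G) (h : H) :
    mapDomain (AddMonoidHom.inl G H) w * single (0, h) 1 = mapDomain (fun g => (g, h)) w := by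
  induction w using induction_linear with
  | zero => simp only [mapDomain_zero, zero_mul]
  | add x y hx hy => rw [mapDomain_add, add_mul, hx, hy, mapDomain_add]
  | single g r => simp [mapDomain_single, single_mul_single]

lemma eq_zero_of_sum_mapDomain_prodMk_eq_zero {ι : Type*} [Fintype ι] {e : ι → H}
    (he : Function.Injective e) {a : ι → AddMonoidAlgebra k G}
    (hsum : ∑ i, mapDomain (fun g => (g, e i)) (a i) = 0) (j : ι) : a j = 0 := by
  ext g
  have hcoeff := congrArg (fun x => x.coeff (g, e j)) hsum
  simp only [coeff_sum, Finset.sum_apply', coeff_mapDomain] at hcoeff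
  rw [Finset.sum_eq_single j,
    Finsupp.mapDomain_apply (fun _ _ h => (Prod.ext_iff.mp h).1)] at hcoeff
  · exact hcoeff
  · intro i _ hij
    refine Finsupp.mapDomain_of_notMem_range _ _ ?_
    rintro ⟨_, hg⟩
    exact hij (he (Prod.ext_iff.mp hg).2)
  · exact fun hj => absurd (Finset.mem_univ j) hj

end Prod

lemma eq_zero_of_upperTriangular_sum_eq_zero {R ι : Type*} [Semiring R] [Fintype ι]
    [LinearOrder ι]
    {p : ι → ι → R} {l : ι → R} (hsupp : ∀ k h, h < k → p k h = 0)
    (hdiag : ∀ k, l k ≠ 0 → l k * p k k ≠ 0) (hsum : ∀ h, ∑ k, l k * p k h = 0) (k : ι) :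
    l k = 0 := by
  induction k using WellFoundedLT.induction with
  | _ k ih =>
    by_contra hk
    refine hdiag k hk ?_
    rw [← hsum k, eq_comm]
    refine Finset.sum_eq_single k (fun j _ hjk => ?_) (fun hk => absurd (Finset.mem_univ k) hk)
    rcases hjk.lt_or_gt with hj | hj
    · rw [ih j hj, zero_mul]
    · rw [hsupp j k hj, mul_zero]

lemma eq_zero_of_sum_emb_mul_xs_eq_zero {F : Type} [Field F] {t : ℕ} {ρ : Fin t → ℕ} {m : ℕ}
    {a : Fin m → QR F ρ} (hsum : ∑ h, emb F ρ m (a h) * xs F ρ h = 0) (h : Fin m) : a h = 0 := by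
  have hinj : Function.Injective fun h : Fin m => ((h : ℕ) : ZMod m) := fun i j hij => by
    rw [ZMod.natCast_eq_natCast_iff', Nat.mod_eq_of_lt i.isLt, Nat.mod_eq_of_lt j.isLt] at hij
    exact Fin.ext hij
  exact eq_zero_of_sum_mapDomain_prodMk_eq_zero hinj
    (by simpa only [emb, xs, mapDomainRingHom_apply, mapDomain_inl_mul_single_zero_one]
      using hsum) h

theorem eq_zero_of_comb_eq_zero_general {F : Type} [Field F] {t : ℕ} {ρ : Fin t → ℕ} {m : ℕ}
    [∀ i, NeZero (ρ i)]
    (p : Fin m → Fin m → QR F ρ)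
    (hlead : ∀ k, p k k ≠ 0)
    (hsupp : ∀ k h, h < k → p k h = 0)
    (l : Fin m → QR F ρ)
    (hdeg : ∀ k, l k = 0 ∨ ∃ hlk : l k ≠ 0,
      ∀ i, deg (l k) hlk i + deg (p k k) (hlead k) i < ρ i)
    (hzero : ∑ k, emb F ρ m (l k) * (∑ h, emb F ρ m (p k h) * xs F ρ h) = 0) :
    ∀ k, l k = 0 := by
  have hdiag : ∀ k, l k ≠ 0 → l k * p k k ≠ 0 := fun k hk => by
    obtain ⟨hlk, hlt⟩ := (hdeg k).resolve_left hk
    exact mul_ne_zero_of_deg_add_deg_lt hlk (hlead k) hlt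
  have hcoeff : ∀ h, ∑ k, l k * p k h = 0 := by
    refine eq_zero_of_sum_emb_mul_xs_eq_zero ?_
    rw [← hzero]
    simp only [map_sum, map_mul, Finset.sum_mul, Finset.mul_sum, mul_assoc]
    exact Finset.sum_comm
  exact eq_zero_of_upperTriangular_sum_eq_zero hsupp hdiag hcoeff

/-- Let `𝔭_k = ∑_{h=k}^{ρ_s-1} p_h^{(k)} x_s^h` for `k = 0,…,ρ_s-1`, with `S`-coefficients
`p k h`, vanishing for `h < k` and with nonzero leading coefficient `p_k = p k k` of degree
`a_k`. If `l_0,…,l_{ρ_s-1} ∈ S` satisfy `deg l_k <₊ (ρ₁,…,ρ_{s-1}) - a_k` componentwise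
(or `l_k = 0`) and `∑_k l_k 𝔭_k = 0` in `R`, then all `l_k = 0`. -/
theorem eq_zero_of_comb_eq_zero {F : Type} [Field F] {t : ℕ} {ρ : Fin t → ℕ} {m : ℕ}
    [NeZero m] [∀ i, NeZero (ρ i)]
    (p : Fin m → Fin m → QR F ρ)
    (hlead : ∀ k, p k k ≠ 0)
    (hsupp : ∀ k h, h < k → p k h = 0)
    (l : Fin m → QR F ρ)
    (hdeg : ∀ k, l k = 0 ∨ ∃ hlk : l k ≠ 0,
      ∀ i, deg (l k) hlk i + deg (p k k) (hlead k) i < ρ i)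
    (hzero : ∑ k, emb F ρ m (l k) * (∑ h, emb F ρ m (p k h) * xs F ρ h) = 0) :
    ∀ k, l k = 0 :=
  eq_zero_of_comb_eq_zero_general p hlead hsupp l hdeg hzero
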